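/- Let k ≥ 1 be an integer, and suppose p₀, p₁, …, p_k, q₁, q₂ : ℝ → ℂ³ are differentiable functions satisfying at t = 0 the constraints ω(q₁,q₂) = 0, ω(p_k,q₂) = 0, and j·ω(p_j,q₁) + (j−1)·ω(p_{j−1},q₂) = 0 for 1 ≤ j ≤ k, and satisfying for all t ∈ ℝ the evolution equations dp₀/dt = 2 p₁×q₁, dp_k/dt = 2k p_k×q₂, dp_j/dt = 2(j+1) p_{j+1}×q₁ + 2j p_j×q₂ for 1 ≤ j ≤ k−1, dq₁/dt = −2 q₁×q₂ and dq₂/dt = 0. Define Φ : ℝ³ → ℂ³ by Φ(x,y,t) = p₀(t) + x·p₁(t) + x²·p₂(t) + ⋯ + x^k·p_k(t) + y·q₁(t) + xy·q₂(t). Then at every point of ℝ³, ω vanishes on each pair of partial derivatives of Φ and Im Ω(∂Φ/∂x, ∂Φ/∂y, ∂Φ/∂t) = 0; that is, N = Φ(ℝ³) is a special Lagrangian 3-fold in ℂ³ wherever it is nonsingular. -/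

import Mathlib

noncomputable section

open Complex ComplexConjugate

/-- ℂ³ as triples of complex numbers. -/
abbrev C3 := ℂ × ℂ × ℂ

/-- The standard Kähler form ω(u,v) = Σ Im(conj(u_j)·v_j). -/
def omega3 (u v : C3) : ℝ :=
  (conj u.1 * v.1).im + (conj u.2.1 * v.2.1).im + (conj u.2.2 * v.2.2).im

/-- The antibilinear cross product on ℂ³. -/
def cross3 (u v : C3) : C3 :=
  ((1/2 : ℂ) * conj (u.2.1 * v.2.2 - u.2.2 * v.2.1),
   (1/2 : ℂ) * conj (u.2.2 * v.1 - u.1 * v.2.2),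
   (1/2 : ℂ) * conj (u.1 * v.2.1 - u.2.1 * v.1))

/-- The holomorphic volume form Ω(u,v,w): determinant of the matrix with columns u,v,w. -/
def Omega3 (u v w : C3) : ℂ :=
  u.1 * (v.2.1 * w.2.2 - v.2.2 * w.2.1)
  - v.1 * (u.2.1 * w.2.2 - u.2.2 * w.2.1)
  + w.1 * (u.2.1 * v.2.2 - u.2.2 * v.2.1)

/-- The map Φ(x,y,t) = Σ_{j=0}^{k} x^j p_j(t) + y q₁(t) + xy q₂(t). -/
def Phi19 (k : ℕ) (p : ℕ → ℝ → C3) (q₁ q₂ : ℝ → C3) (x y t : ℝ) : C3 :=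
  (∑ j ∈ Finset.range (k + 1), (x ^ j) • p j t) + y • q₁ t + (x * y) • q₂ t

/-!
The evolution equations say exactly that `Φₜ = 2 Φₓ × Φ_y`. Since
`ω(u × v, w) = ½ Im Ω(u, v, w)` and `Ω` is alternating, this makes `ω(Φₓ, Φₜ)`, `ω(Φ_y, Φₜ)`
and `Im Ω(Φₓ, Φ_y, Φₜ) = 2 ω(Φₜ/2, Φₜ)` vanish identically. Differentiating `ω(Φₓ, Φ_y)` in `t`
with the same identity (and `∂ₜΦ_y = -2 Φ_y × q₂`) shows that it is constant in time, and at
`t = 0` the constraints say precisely that all its coefficients, as a polynomial in `x` and `y`,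
vanish.
-/

open Finset

section Algebra

variable (r : ℝ) (u v w : C3)

lemma omega3_add_left : omega3 (u + v) w = omega3 u w + omega3 v w := by
  simp only [omega3, Prod.fst_add, Prod.snd_add, map_add, add_mul, add_im]; ring

lemma omega3_add_right : omega3 u (v + w) = omega3 u v + omega3 u w := by
  simp only [omega3, Prod.fst_add, Prod.snd_add, mul_add, add_im]; ring

lemma omega3_smul_left : omega3 (r • u) v = r * omega3 u v := by
  simp only [omega3, Prod.smul_fst, Prod.smul_snd, real_smul, map_mul, conj_ofReal,
    mul_assoc, im_ofReal_mul]; ring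

lemma omega3_smul_right : omega3 u (r • v) = r * omega3 u v := by
  simp only [omega3, Prod.smul_fst, Prod.smul_snd, real_smul, mul_left_comm _ (r : ℂ),
    im_ofReal_mul]; ring

lemma omega3_anticomm : omega3 v u = -omega3 u v := by
  simp only [omega3, mul_im, conj_re, conj_im]; ring

lemma cross3_add_left : cross3 (u + v) w = cross3 u w + cross3 v w := by
  simp only [cross3, Prod.fst_add, Prod.snd_add, Prod.mk_add_mk, ← mul_add, ← map_add]
  congr 1 <;> [skip; congr 1] <;> ring_nf

lemma cross3_add_right : cross3 u (v + w) = cross3 u v + cross3 u w := by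
  simp only [cross3, Prod.fst_add, Prod.snd_add, Prod.mk_add_mk, ← mul_add, ← map_add]
  congr 1 <;> [skip; congr 1] <;> ring_nf

lemma cross3_smul_left : cross3 (r • u) v = r • cross3 u v := by
  simp only [cross3, Prod.smul_fst, Prod.smul_snd, Prod.smul_mk, real_smul, mul_assoc,
    ← mul_sub, map_mul, conj_ofReal, mul_left_comm _ (r : ℂ)]

lemma cross3_smul_right : cross3 u (r • v) = r • cross3 u v := by
  simp only [cross3, Prod.smul_fst, Prod.smul_snd, Prod.smul_mk, real_smul, mul_left_comm _ (r : ℂ),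
    ← mul_sub, map_mul, conj_ofReal]

lemma cross3_anticomm : cross3 v u = -cross3 u v := by
  simp only [cross3, Prod.neg_mk, ← mul_neg, ← map_neg, neg_sub]
  congr 1 <;> [skip; congr 1] <;> ring_nf

lemma cross3_self : cross3 u u = 0 := by
  simp only [cross3, mul_comm u.2.1 u.2.2, mul_comm u.2.2 u.1, mul_comm u.1 u.2.1, sub_self,
    map_zero, mul_zero]
  rfl

lemma Omega3_self_left_right : Omega3 u v u = 0 := by
  simp only [Omega3]; ring

lemma Omega3_self_mid_right : Omega3 u v v = 0 := by
  simp only [Omega3]; ring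

lemma Omega3_swap_left_right : Omega3 w v u = -Omega3 u v w := by
  simp only [Omega3]; ring

lemma omega3_self : omega3 u u = 0 := by
  linarith [omega3_anticomm u u]

lemma omega3_cross_left : omega3 (cross3 u v) w = (Omega3 u v w).im / 2 := by
  simp only [Omega3, omega3, cross3, mul_im, mul_re, sub_re, sub_im, add_im, conj_re, conj_im]
  norm_num; ring

lemma omega3_self_cross : omega3 u (cross3 u v) = 0 := by
  rw [omega3_anticomm, omega3_cross_left, Omega3_self_left_right]; simp

lemma omega3_cross_self : omega3 v (cross3 u v) = 0 := by
  rw [omega3_anticomm, omega3_cross_left, Omega3_self_mid_right]; simp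

lemma omega3_cross_swap : omega3 (cross3 u w) v = omega3 u (cross3 v w) := by
  rw [omega3_anticomm (cross3 v w) u, omega3_cross_left, omega3_cross_left,
    Omega3_swap_left_right, neg_im]
  ring

end Algebra

def omega3Bilin : C3 →ₗ[ℝ] C3 →ₗ[ℝ] ℝ :=
  LinearMap.mk₂ ℝ omega3 omega3_add_left omega3_smul_left omega3_add_right omega3_smul_right

def cross3Bilin : C3 →ₗ[ℝ] C3 →ₗ[ℝ] C3 :=
  LinearMap.mk₂ ℝ cross3 cross3_add_left cross3_smul_left cross3_add_right cross3_smul_right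

section Derivatives

variable {E F G : Type*} [NormedAddCommGroup E] [NormedSpace ℝ E]
  [NormedAddCommGroup F] [NormedSpace ℝ F] [NormedAddCommGroup G] [NormedSpace ℝ G]

lemma LinearMap.hasDerivAt_of_bilinear [FiniteDimensional ℝ E] [FiniteDimensional ℝ F]
    (B : E →ₗ[ℝ] F →ₗ[ℝ] G) {u : ℝ → E} {v : ℝ → F} {u' : E} {v' : F} {t : ℝ}
    (hu : HasDerivAt u u' t) (hv : HasDerivAt v v' t) :
    HasDerivAt (fun s ↦ B (u s) (v s)) (B (u t) v' + B u' (v t)) t :=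
  (LinearMap.toContinuousLinearMap (LinearMap.toContinuousLinearMap.toLinearMap ∘ₗ B)
    ).hasDerivAt_of_bilinear (fun _ ↦ hu) (fun _ ↦ hv)

lemma hasDerivAt_omega3 {u v : ℝ → C3} {u' v' : C3} {t : ℝ}
    (hu : HasDerivAt u u' t) (hv : HasDerivAt v v' t) :
    HasDerivAt (fun s ↦ omega3 (u s) (v s)) (omega3 (u t) v' + omega3 u' (v t)) t :=
  omega3Bilin.hasDerivAt_of_bilinear hu hv

lemma hasDerivAt_cross3 {u v : ℝ → C3} {u' v' : C3} {t : ℝ}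
    (hu : HasDerivAt u u' t) (hv : HasDerivAt v v' t) :
    HasDerivAt (fun s ↦ cross3 (u s) (v s)) (cross3 (u t) v' + cross3 u' (v t)) t :=
  cross3Bilin.hasDerivAt_of_bilinear hu hv

lemma hasDerivAt_sum_smul {n : ℕ} (c : ℕ → ℝ) {v : ℕ → ℝ → E} {v' : ℕ → E} {t : ℝ}
    (hv : ∀ j < n, HasDerivAt (v j) (v' j) t) :
    HasDerivAt (fun s ↦ ∑ j ∈ range n, c j • v j s) (∑ j ∈ range n, c j • v' j) t :=
  HasDerivAt.fun_sum fun j hj ↦ (hv j (mem_range.mp hj)).const_smul (c j)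

end Derivatives

section VectorPolynomial

variable {M : Type*} [AddCommMonoid M] [Module ℝ M]

def vpoly (n : ℕ) (v : ℕ → M) (x : ℝ) : M := ∑ j ∈ range n, x ^ j • v j

def vpolyDeriv (n : ℕ) (v : ℕ → M) (x : ℝ) : M := ∑ j ∈ range n, ((j : ℝ) * x ^ (j - 1)) • v j

lemma map_vpolyDeriv {N : Type*} [AddCommMonoid N] [Module ℝ N] (L : M →ₗ[ℝ] N) (n : ℕ)
    (v : ℕ → M) (x : ℝ) : L (vpolyDeriv n v x) = vpolyDeriv n (fun j ↦ L (v j)) x := by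
  simp only [vpolyDeriv, map_sum, map_smul]

-- Both the evolution equations of the `p j` and the constraints at `t = 0` have this shape.
lemma vpolyDeriv_add_smul_vpolyDeriv (k : ℕ) (a b : ℕ → M) (x : ℝ) :
    vpolyDeriv (k + 1) a x + x • vpolyDeriv (k + 1) b x =
      ∑ j ∈ range k, x ^ j • (((j : ℝ) + 1) • a (j + 1) + (j : ℝ) • b j)
        + x ^ k • (k : ℝ) • b k := by
  have ha : vpolyDeriv (k + 1) a x = ∑ j ∈ range k, x ^ j • ((j : ℝ) + 1) • a (j + 1) := by
    simp only [vpolyDeriv, sum_range_succ', Nat.cast_zero, mul_zero, zero_smul, add_zero,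
      Nat.cast_succ, Nat.add_sub_cancel, smul_smul, mul_comm]
  have hb : x • vpolyDeriv (k + 1) b x = ∑ j ∈ range (k + 1), x ^ j • (j : ℝ) • b j := by
    refine (smul_sum ..).trans (sum_congr rfl fun j _ ↦ ?_)
    rcases j with _ | j
    · simp
    · rw [smul_smul, smul_smul, Nat.add_sub_cancel, pow_succ]; ring_nf
  rw [ha, hb, sum_range_succ, ← add_assoc, ← sum_add_distrib]
  simp only [smul_add]

variable {E : Type*} [NormedAddCommGroup E] [NormedSpace ℝ E]

lemma hasDerivAt_vpoly (n : ℕ) (v : ℕ → E) (x : ℝ) :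
    HasDerivAt (vpoly n v) (vpolyDeriv n v x) x :=
  HasDerivAt.fun_sum fun j _ ↦ (hasDerivAt_pow j x).smul_const (v j)

lemma differentiable_vpolyDeriv (n : ℕ) (v : ℕ → E) : Differentiable ℝ (vpolyDeriv n v) := by
  unfold vpolyDeriv; fun_prop

end VectorPolynomial

def Phi19X (k : ℕ) (p : ℕ → ℝ → C3) (q₂ : ℝ → C3) (x y t : ℝ) : C3 :=
  vpolyDeriv (k + 1) (fun j ↦ p j t) x + y • q₂ t

def Phi19Y (q₁ q₂ : ℝ → C3) (x t : ℝ) : C3 := q₁ t + x • q₂ t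

section Partials

variable (k : ℕ) (p : ℕ → ℝ → C3) (q₁ q₂ : ℝ → C3) (x y t : ℝ)

lemma hasDerivAt_Phi19_x :
    HasDerivAt (fun s ↦ Phi19 k p q₁ q₂ s y t) (Phi19X k p q₂ x y t) x := by
  refine (((hasDerivAt_vpoly (k + 1) (fun j ↦ p j t) x).add_const (y • q₁ t)).add
    (((hasDerivAt_id x).mul_const y).smul_const (q₂ t))).congr_deriv ?_
  simp [Phi19X]

lemma hasDerivAt_Phi19_y :
    HasDerivAt (fun s ↦ Phi19 k p q₁ q₂ x s t) (Phi19Y q₁ q₂ x t) y := by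
  refine ((((hasDerivAt_id y).smul_const (q₁ t)).const_add _).add
    (((hasDerivAt_id y).const_mul x).smul_const (q₂ t))).congr_deriv ?_
  simp [Phi19Y]

end Partials

structure IsSLEvolution (k : ℕ) (p : ℕ → ℝ → C3) (q₁ q₂ : ℝ → C3) : Prop where
  p_zero : ∀ t : ℝ, HasDerivAt (p 0) ((2:ℝ) • cross3 (p 1 t) (q₁ t)) t
  p_last : ∀ t : ℝ, HasDerivAt (p k) ((2 * (k : ℝ)) • cross3 (p k t) (q₂ t)) t
  p_mid : ∀ j : ℕ, 1 ≤ j → j ≤ k - 1 → ∀ t : ℝ,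
    HasDerivAt (p j)
      ((2 * ((j : ℝ) + 1)) • cross3 (p (j+1) t) (q₁ t)
        + (2 * (j : ℝ)) • cross3 (p j t) (q₂ t)) t
  q_one : ∀ t : ℝ, HasDerivAt q₁ ((-2:ℝ) • cross3 (q₁ t) (q₂ t)) t
  q_two : ∀ t : ℝ, HasDerivAt q₂ (0 : C3) t

namespace IsSLEvolution

variable {k : ℕ} {p : ℕ → ℝ → C3} {q₁ q₂ : ℝ → C3}

lemma hasDerivAt_p_of_lt (h : IsSLEvolution k p q₁ q₂) {j : ℕ} (hj : j < k) (t : ℝ) :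
    HasDerivAt (p j)
      ((2 * ((j : ℝ) + 1)) • cross3 (p (j+1) t) (q₁ t)
        + (2 * (j : ℝ)) • cross3 (p j t) (q₂ t)) t := by
  rcases j with _ | j
  · simpa using h.p_zero t
  · exact h.p_mid (j + 1) (by omega) (by omega) t

lemma differentiableAt_p (h : IsSLEvolution k p q₁ q₂) {j : ℕ} (hj : j ≤ k) (t : ℝ) :
    DifferentiableAt ℝ (p j) t := by
  rcases hj.lt_or_eq with hj | rfl
  · exact (h.hasDerivAt_p_of_lt hj t).differentiableAt
  · exact (h.p_last t).differentiableAt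

lemma vpoly_deriv_p (h : IsSLEvolution k p q₁ q₂) (x t : ℝ) :
    vpoly (k + 1) (fun j ↦ deriv (p j) t) x =
      (2:ℝ) • cross3 (vpolyDeriv (k + 1) (fun j ↦ p j t) x) (Phi19Y q₁ q₂ x t) := by
  have hcross : ∀ w, cross3 (vpolyDeriv (k + 1) (fun j ↦ p j t) x) w =
      vpolyDeriv (k + 1) (fun j ↦ cross3 (p j t) w) x :=
    fun w ↦ map_vpolyDeriv (cross3Bilin.flip w) _ _ _
  rw [Phi19Y, cross3_add_right, cross3_smul_right, hcross, hcross, vpolyDeriv_add_smul_vpolyDeriv,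
    vpoly, sum_range_succ, (h.p_last t).deriv, smul_add, smul_sum]
  congr 1
  · refine sum_congr rfl fun j hj ↦ ?_
    rw [(h.hasDerivAt_p_of_lt (mem_range.mp hj) t).deriv]
    module
  · module

lemma hasDerivAt_Phi19_t (h : IsSLEvolution k p q₁ q₂) (x y t : ℝ) :
    HasDerivAt (fun s ↦ Phi19 k p q₁ q₂ x y s)
      ((2:ℝ) • cross3 (Phi19X k p q₂ x y t) (Phi19Y q₁ q₂ x t)) t := by
  have hP : HasDerivAt (fun s ↦ vpoly (k + 1) (fun j ↦ p j s) x)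
      (vpoly (k + 1) (fun j ↦ deriv (p j) t) x) t :=
    hasDerivAt_sum_smul (x ^ ·)
      fun j hj ↦ (h.differentiableAt_p (Nat.lt_succ_iff.mp hj) t).hasDerivAt
  refine ((hP.add ((h.q_one t).const_smul y)).add ((h.q_two t).const_smul (x * y))).congr_deriv ?_
  rw [h.vpoly_deriv_p, Phi19X, cross3_add_left, cross3_smul_left, Phi19Y,
    cross3_add_right (q₂ t), cross3_smul_right, cross3_self, cross3_anticomm (q₂ t)]
  module

lemma hasDerivAt_omega3_Phi19X_Phi19Y (h : IsSLEvolution k p q₁ q₂) (x y t : ℝ) :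
    HasDerivAt (fun s ↦ omega3 (Phi19X k p q₂ x y s) (Phi19Y q₁ q₂ x s)) 0 t := by
  set D : ℕ → C3 := fun j ↦ deriv (p j) t
  set Y := Phi19Y q₁ q₂ x t
  have hX : HasDerivAt (fun s ↦ Phi19X k p q₂ x y s) (vpolyDeriv (k + 1) D x) t := by
    refine ((hasDerivAt_sum_smul _ fun j hj ↦
      (h.differentiableAt_p (Nat.lt_succ_iff.mp hj) t).hasDerivAt).add
        ((h.q_two t).const_smul y)).congr_deriv ?_
    simp [vpolyDeriv, D]
  have hY : HasDerivAt (fun s ↦ Phi19Y q₁ q₂ x s) ((-2:ℝ) • cross3 Y (q₂ t)) t := by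
    refine ((h.q_one t).add ((h.q_two t).const_smul x)).congr_deriv ?_
    simp [Y, Phi19Y, cross3_add_left, cross3_smul_left, cross3_self]
  -- `Φ` is polynomial in `x`, so `∂ₜ∂ₓΦ = ∂ₓ∂ₜΦ`, and `∂ₓ∂ₜΦ` comes from `Φₜ = 2 Φₓ × Φ_y`.
  have hmixed : vpolyDeriv (k + 1) D x =
      (2:ℝ) • (cross3 (vpolyDeriv (k + 1) (fun j ↦ p j t) x) (q₂ t) +
        cross3 (deriv (vpolyDeriv (k + 1) (fun j ↦ p j t)) x) Y) := by
    have hYx : HasDerivAt (fun x' ↦ Phi19Y q₁ q₂ x' t) (q₂ t) x :=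
      (((hasDerivAt_id x).smul_const (q₂ t)).const_add (q₁ t)).congr_deriv (one_smul ℝ _)
    refine (hasDerivAt_vpoly (k + 1) D x).unique ?_
    convert ((hasDerivAt_cross3 ((differentiable_vpolyDeriv _ _) x).hasDerivAt hYx).const_smul
      (2:ℝ)) using 1
    exact funext fun x' ↦ h.vpoly_deriv_p x' t
  refine (hasDerivAt_omega3 hX hY).congr_deriv ?_
  rw [hmixed, Phi19X, omega3_smul_right, omega3_smul_left, omega3_add_left, omega3_add_left,
    omega3_smul_left, omega3_cross_self, omega3_cross_left _ Y Y, Omega3_self_mid_right,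
    omega3_cross_swap]
  simp only [zero_im, zero_div]
  ring

lemma omega3_Phi19X_Phi19Y_eq (h : IsSLEvolution k p q₁ q₂) (x y t : ℝ) :
    omega3 (Phi19X k p q₂ x y t) (Phi19Y q₁ q₂ x t) =
      omega3 (Phi19X k p q₂ x y 0) (Phi19Y q₁ q₂ x 0) :=
  is_const_of_deriv_eq_zero (fun s ↦ (h.hasDerivAt_omega3_Phi19X_Phi19Y x y s).differentiableAt)
    (fun s ↦ (h.hasDerivAt_omega3_Phi19X_Phi19Y x y s).deriv) t 0

end IsSLEvolution

lemma omega3_Phi19X_Phi19Y_zero {k : ℕ} {p : ℕ → ℝ → C3} {q₁ q₂ : ℝ → C3}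
    (hc1 : omega3 (q₁ 0) (q₂ 0) = 0)
    (hc2 : omega3 (p k 0) (q₂ 0) = 0)
    (hc3 : ∀ j : ℕ, 1 ≤ j → j ≤ k →
      (j : ℝ) * omega3 (p j 0) (q₁ 0) + ((j : ℝ) - 1) * omega3 (p (j-1) 0) (q₂ 0) = 0)
    (x y : ℝ) : omega3 (Phi19X k p q₂ x y 0) (Phi19Y q₁ q₂ x 0) = 0 := by
  have hω : ∀ w, omega3 (vpolyDeriv (k + 1) (fun j ↦ p j 0) x) w =
      vpolyDeriv (k + 1) (fun j ↦ omega3 (p j 0) w) x :=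
    fun w ↦ map_vpolyDeriv (omega3Bilin.flip w) _ _ _
  have hq : omega3 (q₂ 0) (q₁ 0 + x • q₂ 0) = 0 := by
    rw [omega3_add_right, omega3_smul_right, omega3_anticomm, hc1, omega3_self]; ring
  rw [Phi19X, Phi19Y, omega3_add_left, omega3_smul_left, hq, mul_zero, add_zero, omega3_add_right,
    omega3_smul_right, hω, hω, ← smul_eq_mul x, vpolyDeriv_add_smul_vpolyDeriv, hc2, smul_zero,
    smul_zero, add_zero]
  refine sum_eq_zero fun j hj ↦ ?_
  have := hc3 (j + 1) (by omega) (mem_range.mp hj)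
  push_cast at this
  rw [add_sub_cancel_right] at this
  simp only [smul_eq_mul, this, mul_zero]

theorem statement_19_general
    (k : ℕ)
    (p : ℕ → ℝ → C3) (q₁ q₂ : ℝ → C3)
    -- the constraints at t = 0
    (hc1 : omega3 (q₁ 0) (q₂ 0) = 0)
    (hc2 : omega3 (p k 0) (q₂ 0) = 0)
    (hc3 : ∀ j : ℕ, 1 ≤ j → j ≤ k →
      (j : ℝ) * omega3 (p j 0) (q₁ 0) + ((j : ℝ) - 1) * omega3 (p (j-1) 0) (q₂ 0) = 0)
    -- the evolution equations
    (hp0 : ∀ t : ℝ, HasDerivAt (p 0) ((2:ℝ) • cross3 (p 1 t) (q₁ t)) t)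
    (hpk : ∀ t : ℝ, HasDerivAt (p k) ((2 * (k : ℝ)) • cross3 (p k t) (q₂ t)) t)
    (hpj : ∀ j : ℕ, 1 ≤ j → j ≤ k - 1 → ∀ t : ℝ,
      HasDerivAt (p j)
        ((2 * ((j : ℝ) + 1)) • cross3 (p (j+1) t) (q₁ t)
          + (2 * (j : ℝ)) • cross3 (p j t) (q₂ t)) t)
    (hq1 : ∀ t : ℝ, HasDerivAt q₁ ((-2:ℝ) • cross3 (q₁ t) (q₂ t)) t)
    (hq2 : ∀ t : ℝ, HasDerivAt q₂ (0 : C3) t) :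
    ∀ x y t : ℝ,
      omega3 (deriv (fun s => Phi19 k p q₁ q₂ s y t) x)
             (deriv (fun s => Phi19 k p q₁ q₂ x s t) y) = 0 ∧
      omega3 (deriv (fun s => Phi19 k p q₁ q₂ s y t) x)
             (deriv (fun s => Phi19 k p q₁ q₂ x y s) t) = 0 ∧
      omega3 (deriv (fun s => Phi19 k p q₁ q₂ x s t) y)
             (deriv (fun s => Phi19 k p q₁ q₂ x y s) t) = 0 ∧
      (Omega3 (deriv (fun s => Phi19 k p q₁ q₂ s y t) x)
              (deriv (fun s => Phi19 k p q₁ q₂ x s t) y)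
              (deriv (fun s => Phi19 k p q₁ q₂ x y s) t)).im = 0 := by
  intro x y t
  have h : IsSLEvolution k p q₁ q₂ := ⟨hp0, hpk, hpj, hq1, hq2⟩
  rw [(hasDerivAt_Phi19_x k p q₁ q₂ x y t).deriv, (hasDerivAt_Phi19_y k p q₁ q₂ x y t).deriv,
    (h.hasDerivAt_Phi19_t x y t).deriv]
  set X := Phi19X k p q₂ x y t
  set Y := Phi19Y q₁ q₂ x t
  have hΩ := omega3_cross_left X Y ((2:ℝ) • cross3 X Y)
  rw [omega3_smul_right, omega3_self, mul_zero] at hΩ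
  refine ⟨(h.omega3_Phi19X_Phi19Y_eq x y t).trans (omega3_Phi19X_Phi19Y_zero hc1 hc2 hc3 x y),
    ?_, ?_, by linarith⟩
  · rw [omega3_smul_right, omega3_self_cross, mul_zero]
  · rw [omega3_smul_right, omega3_cross_self, mul_zero]

theorem statement_19
    (k : ℕ) (hk : 1 ≤ k)
    (p : ℕ → ℝ → C3) (q₁ q₂ : ℝ → C3)
    -- the constraints at t = 0
    (hc1 : omega3 (q₁ 0) (q₂ 0) = 0)
    (hc2 : omega3 (p k 0) (q₂ 0) = 0)
    (hc3 : ∀ j : ℕ, 1 ≤ j → j ≤ k →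
      (j : ℝ) * omega3 (p j 0) (q₁ 0) + ((j : ℝ) - 1) * omega3 (p (j-1) 0) (q₂ 0) = 0)
    -- the evolution equations
    (hp0 : ∀ t : ℝ, HasDerivAt (p 0) ((2:ℝ) • cross3 (p 1 t) (q₁ t)) t)
    (hpk : ∀ t : ℝ, HasDerivAt (p k) ((2 * (k : ℝ)) • cross3 (p k t) (q₂ t)) t)
    (hpj : ∀ j : ℕ, 1 ≤ j → j ≤ k - 1 → ∀ t : ℝ,
      HasDerivAt (p j)
        ((2 * ((j : ℝ) + 1)) • cross3 (p (j+1) t) (q₁ t)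
          + (2 * (j : ℝ)) • cross3 (p j t) (q₂ t)) t)
    (hq1 : ∀ t : ℝ, HasDerivAt q₁ ((-2:ℝ) • cross3 (q₁ t) (q₂ t)) t)
    (hq2 : ∀ t : ℝ, HasDerivAt q₂ (0 : C3) t) :
    ∀ x y t : ℝ,
      omega3 (deriv (fun s => Phi19 k p q₁ q₂ s y t) x)
             (deriv (fun s => Phi19 k p q₁ q₂ x s t) y) = 0 ∧
      omega3 (deriv (fun s => Phi19 k p q₁ q₂ s y t) x)
             (deriv (fun s => Phi19 k p q₁ q₂ x y s) t) = 0 ∧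
      omega3 (deriv (fun s => Phi19 k p q₁ q₂ x s t) y)
             (deriv (fun s => Phi19 k p q₁ q₂ x y s) t) = 0 ∧
      (Omega3 (deriv (fun s => Phi19 k p q₁ q₂ s y t) x)
              (deriv (fun s => Phi19 k p q₁ q₂ x s t) y)
              (deriv (fun s => Phi19 k p q₁ q₂ x y s) t)).im = 0 :=
  statement_19_general k p q₁ q₂ hc1 hc2 hc3 hp0 hpk hpj hq1 hq2
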